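/- Let n be an even positive integer that is not a power of 2, and k a field of characteristic 2. Then the quadratic form q(x) = (C(n,n/2)/2) x_{n/2}² + Σ_{0 ≤ m < n/2, m even} C(n,m) x_m x_{n-m} on k^{n+1} (coefficients reduced mod 2) has nondefective part isomorphic to an orthogonal sum of 2^{s(n)-1} hyperbolic planes. -/
import Mathlib
open Finset

private lemma choose_mod_two (n m : ℕ) :
    n.choose m % 2 = ((n % 2).choose (m % 2) * ((n / 2).choose (m / 2))) % 2 :=
  Choose.choose_modEq_choose_mod_mul_choose_div_nat (p := 2)

private lemma choose_ee (a b : ℕ) : (2 * a).choose (2 * b) % 2 = a.choose b % 2 := by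
  rw [choose_mod_two]; simp [Nat.mul_mod_right, Nat.mul_div_cancel_left]

private lemma choose_eo (a b : ℕ) : (2 * a).choose (2 * b + 1) % 2 = 0 := by
  rw [choose_mod_two]; simp [Nat.mul_mod_right, Nat.mul_add_mod]

private lemma choose_oe (a b : ℕ) : (2 * a + 1).choose (2 * b) % 2 = a.choose b % 2 := by
  rw [choose_mod_two]; simp [Nat.mul_add_mod, Nat.mul_mod_right, Nat.mul_add_div, Nat.mul_div_cancel_left]

private lemma choose_oo (a b : ℕ) : (2 * a + 1).choose (2 * b + 1) % 2 = a.choose b % 2 := by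
  rw [choose_mod_two]; simp [Nat.mul_add_mod, Nat.mul_add_div]

private lemma filter_even_row (a : ℕ) :
    (Finset.range (2 * a + 1)).filter (fun m => (2 * a).choose m % 2 = 1) =
      ((Finset.range (a + 1)).filter (fun j => a.choose j % 2 = 1)).image (fun j => 2 * j) := by
  ext m
  simp only [mem_filter, mem_range, mem_image]
  constructor
  · rintro ⟨hm, hodd⟩
    rcases Nat.even_or_odd m with ⟨b, rfl⟩ | ⟨b, rfl⟩
    · rw [show b + b = 2 * b by ring] at hm hodd
      refine ⟨b, ⟨by omega, ?_⟩, by ring⟩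
      rw [choose_ee] at hodd; exact hodd
    · rw [choose_eo] at hodd; omega
  · rintro ⟨j, ⟨hj, hodd⟩, rfl⟩
    exact ⟨by omega, by rw [choose_ee]; exact hodd⟩

private lemma filter_odd_row (a : ℕ) :
    (Finset.range (2 * a + 1 + 1)).filter (fun m => (2 * a + 1).choose m % 2 = 1) =
      ((Finset.range (a + 1)).filter (fun j => a.choose j % 2 = 1)).image (fun j => 2 * j) ∪
      ((Finset.range (a + 1)).filter (fun j => a.choose j % 2 = 1)).image (fun j => 2 * j + 1) := by
  ext m
  simp only [mem_filter, mem_range, mem_image, mem_union]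
  constructor
  · rintro ⟨hm, hodd⟩
    rcases Nat.even_or_odd m with ⟨b, rfl⟩ | ⟨b, rfl⟩
    · rw [show b + b = 2 * b by ring] at hm hodd
      exact Or.inl ⟨b, ⟨by omega, by rw [choose_oe] at hodd; exact hodd⟩, by ring⟩
    · exact Or.inr ⟨b, ⟨by omega, by rw [choose_oo] at hodd; exact hodd⟩, rfl⟩
  · rintro (⟨j, ⟨hj, hodd⟩, rfl⟩ | ⟨j, ⟨hj, hodd⟩, rfl⟩)
    · exact ⟨by omega, by rw [choose_oe]; exact hodd⟩
    · exact ⟨by omega, by rw [choose_oo]; exact hodd⟩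

private lemma card_row : ∀ n : ℕ,
    ((Finset.range (n + 1)).filter (fun m => n.choose m % 2 = 1)).card =
      2 ^ ((Nat.digits 2 n).count 1) := by
  intro n
  induction n using Nat.strong_induction_on with
  | _ n IH =>
    rcases Nat.eq_zero_or_pos n with rfl | hn
    · simp
      decide
    have hd : Nat.digits 2 n = n % 2 :: Nat.digits 2 (n / 2) :=
      Nat.digits_def' (by norm_num) (by omega)
    rcases Nat.even_or_odd n with ⟨a, h⟩ | ⟨a, h⟩
    · have ha : n = 2 * a := by omega
      have hapos : 0 < a := by omega
      subst ha
      rw [filter_even_row, Finset.card_image_of_injective _ (fun x y h => by omega),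
        IH a (by omega), hd]
      have : (2 * a) % 2 = 0 := by omega
      rw [this, List.count_cons]
      simp [Nat.mul_div_cancel_left a (by norm_num : 0 < 2)]
    · have ha : n = 2 * a + 1 := by omega
      subst ha
      rw [filter_odd_row, Finset.card_union_of_disjoint, Finset.card_image_of_injective _ (fun x y h => by omega),
        Finset.card_image_of_injective _ (fun x y h => by omega), IH a (by omega), hd]
      · have h1 : (2 * a + 1) % 2 = 1 := by omega
        have h2 : (2 * a + 1) / 2 = a := by omega
        rw [h1, h2, List.count_cons]
        simp [pow_succ]
        ring
      · rw [Finset.disjoint_left]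
        rintro x hx hy
        simp only [mem_image, mem_filter] at hx hy
        obtain ⟨j, _, rfl⟩ := hx
        obtain ⟨j', _, hj'⟩ := hy
        omega

private lemma central_even : ∀ a, 0 < a → (2 * a).choose a % 2 = 0 := by
  intro a
  induction a using Nat.strong_induction_on with
  | _ a IH =>
    intro ha
    rcases Nat.even_or_odd a with ⟨b, h⟩ | ⟨b, h⟩
    · have hb : a = 2 * b := by omega
      subst hb
      rw [show 2 * (2 * b) = 2 * (2 * b) from rfl, choose_ee]
      exact IH b (by omega) (by omega)
    · have hb : a = 2 * b + 1 := by omega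
      subst hb
      exact choose_eo (2 * b + 1) b

private lemma shifted_even : ∀ a, 0 < a → (¬ ∃ j, a = 2 ^ j) → (2 * a - 1).choose (a - 1) % 2 = 0 := by
  intro a
  induction a using Nat.strong_induction_on with
  | _ a IH =>
    intro ha hpow
    rcases Nat.even_or_odd a with ⟨b, h⟩ | ⟨b, h⟩
    · have hb : a = 2 * b := by omega
      subst hb
      have hbpos : 0 < b := by omega
      have hbpow : ¬ ∃ j, b = 2 ^ j := by
        rintro ⟨j, rfl⟩
        exact hpow ⟨j + 1, by rw [pow_succ]; ring⟩
      have h1 : 2 * (2 * b) - 1 = 2 * (2 * b - 1) + 1 := by omega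
      have h2 : 2 * b - 1 = 2 * (b - 1) + 1 := by omega
      rw [h1, h2, choose_oo]
      have := IH b (by omega) hbpos hbpow
      rwa [h2] at this
    · have hb : a = 2 * b + 1 := by omega
      subst hb
      have hbpos : 0 < b := by
        rcases Nat.eq_zero_or_pos b with rfl | h'
        · exact absurd ⟨0, by norm_num⟩ hpow
        · exact h'
      have h1 : 2 * (2 * b + 1) - 1 = 2 * (2 * b) + 1 := by omega
      have h2 : 2 * b + 1 - 1 = 2 * b := by omega
      rw [h1, h2, choose_oe]
      exact central_even b hbpos

private lemma s_pos : ∀ n, 0 < n → 0 < (Nat.digits 2 n).count 1 := by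
  intro n
  induction n using Nat.strong_induction_on with
  | _ n IH =>
    intro hn
    have hd : Nat.digits 2 n = n % 2 :: Nat.digits 2 (n / 2) :=
      Nat.digits_def' (by norm_num) (by omega)
    rw [hd, List.count_cons]
    rcases Nat.even_or_odd n with ⟨b, h⟩ | ⟨b, h⟩
    · have : 0 < (Nat.digits 2 (n / 2)).count 1 := IH (n / 2) (by omega) (by omega)
      omega
    · simp [show n % 2 = 1 by omega]

private lemma even_of_choose_odd {n m : ℕ} (hn : n % 2 = 0) (h : n.choose m % 2 = 1) :
    m % 2 = 0 := by
  by_contra hm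
  have hm1 : m % 2 = 1 := by omega
  have h2 := choose_mod_two n m
  rw [hn, hm1] at h2
  simp at h2
  omega

private lemma cast0 {k : Type*} [Field k] [CharP k 2] {c : ℕ} (h : c % 2 = 0) : (c : k) = 0 :=
  (CharP.cast_eq_zero_iff k 2 c).mpr (Nat.dvd_of_mod_eq_zero h)

private lemma cast1 {k : Type*} [Field k] [CharP k 2] {c : ℕ} (h : c % 2 = 1) : (c : k) = 1 := by
  obtain ⟨d, rfl⟩ : ∃ d, c = 2 * d + 1 := ⟨c / 2, by omega⟩
  push_cast
  rw [show ((2 : k)) = 0 by exact_mod_cast (CharP.cast_eq_zero k 2)]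
  ring

private theorem exists_equiv (k : Type*) [Field k] {P : Type*} {N M : ℕ}
    (aa bb : Fin N → P) (cc : Fin M → P)
    (hbij : Function.Bijective (Sum.elim (Sum.elim aa bb) cc)) :
    ∃ e : (P → k) ≃ₗ[k] (Fin N → k × k) × (Fin M → k),
      ∀ (x : P → k) (j : Fin N), (e x).1 j = (x (aa j), x (bb j)) := by
  set ψ : (Fin N ⊕ Fin N) ⊕ Fin M → P := Sum.elim (Sum.elim aa bb) cc with hψ
  let E := Equiv.ofBijective ψ hbij
  have hE : ∀ u, E u = ψ u := fun _ => rfl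
  have hsymm : ∀ u, E.symm (ψ u) = u := fun u => by
    rw [← hE]; exact E.symm_apply_apply u
  refine ⟨{ toFun := fun x => (fun j => (x (aa j), x (bb j)), fun i => x (cc i))
            map_add' := fun x y => rfl
            map_smul' := fun c x => rfl
            invFun := fun p t =>
              Sum.elim (Sum.elim (fun j => (p.1 j).1) (fun j => (p.1 j).2)) p.2 (E.symm t)
            left_inv := ?_
            right_inv := ?_ }, fun x j => rfl⟩
  · intro x
    funext t
    have ht : ψ (E.symm t) = t := by rw [← hE]; exact E.apply_symm_apply t
    show Sum.elim (Sum.elim (fun j => x (aa j)) (fun j => x (bb j))) (fun i => x (cc i))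
        (E.symm t) = x t
    rcases hu : E.symm t with (j | j) | i <;> rw [hu] at ht <;> exact congrArg x ht
  · intro p
    refine Prod.ext ?_ ?_
    · funext j
      show (Sum.elim _ _ (E.symm (aa j)), Sum.elim _ _ (E.symm (bb j))) = p.1 j
      rw [show aa j = ψ (Sum.inl (Sum.inl j)) from rfl, hsymm,
        show bb j = ψ (Sum.inl (Sum.inr j)) from rfl, hsymm]
      rfl
    · funext i
      show Sum.elim _ _ (E.symm (cc i)) = p.2 i
      rw [show cc i = ψ (Sum.inr i) from rfl, hsymm]
      rfl

/-- Characteristic 2, `n` even, positive, and not a power of 2: the invariant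
quadratic form `(C(n,n/2)/2) x_{n/2}² + Σ_{m < n/2 even} C(n,m) x_m x_{n-m}` on
`k^{n+1}` has nondefective part isomorphic to `2^(s(n)-1)` hyperbolic planes,
where `s(n)` is the number of ones in the binary expansion of `n`. -/
theorem invariant_form_char_two_not_power (k : Type*) [Field k] [CharP k 2]
    (n : ℕ) (hn : Even n) (hpos : 0 < n) (hnpow : ¬ ∃ j : ℕ, n = 2 ^ j) :
    ∃ e : (Fin (n + 1) → k) ≃ₗ[k]
        ((Fin (2 ^ ((Nat.digits 2 n).count 1 - 1)) → k × k) ×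
          (Fin (n + 1 - 2 ^ ((Nat.digits 2 n).count 1)) → k)),
      ∀ x : Fin (n + 1) → k,
        ((n.choose (n / 2) / 2 : ℕ) : k) *
            x ⟨n / 2, Nat.lt_succ_of_le (Nat.div_le_self n 2)⟩ ^ 2 +
          (∑ m : Fin (n + 1),
            if (m : ℕ) < n / 2 ∧ Even (m : ℕ) then
              (n.choose (m : ℕ) : k) * x m * x m.rev else 0) =
        ∑ j, ((e x).1 j).1 * ((e x).1 j).2 := by
  classical
  obtain ⟨a, hna⟩ := hn
  have hn2 : n = 2 * a := by omega
  have hapos : 0 < a := by omega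
  have hhalf : n / 2 = a := by omega
  set s : ℕ := (Nat.digits 2 n).count 1 with hs
  have hs1 : 1 ≤ s := s_pos n hpos
  have hF : ((Finset.range (n + 1)).filter (fun m => n.choose m % 2 = 1)).card = 2 ^ s :=
    card_row n
  have hFle : (2 : ℕ) ^ s ≤ n + 1 := by
    rw [← hF]; exact le_trans (Finset.card_filter_le _ _) (by simp)
  have h2sum : (2 : ℕ) ^ (s - 1) + 2 ^ (s - 1) = 2 ^ s := by
    have h2 : (2 : ℕ) ^ s = 2 ^ (s - 1) * 2 := by rw [← pow_succ]; congr 1; omega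
    omega
  have hcen : n.choose a % 2 = 0 := by rw [hn2]; exact central_even a hapos
  set A' : Finset ℕ := (Finset.range a).filter (fun m => n.choose m % 2 = 1) with hA'
  have hB'card : (A'.image (fun m => n - m)).card = A'.card := by
    apply Finset.card_image_of_injOn
    intro u hu v hv huv
    simp only [Finset.mem_coe, hA', mem_filter, mem_range] at hu hv
    have hu1 : u < a := hu.1
    have hv1 : v < a := hv.1
    simp only at huv
    omega
  have hsplit : (Finset.range (n + 1)).filter (fun m => n.choose m % 2 = 1)
      = A' ∪ A'.image (fun m => n - m) := by
    ext m
    simp only [hA', mem_union, mem_image, mem_filter, mem_range]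
    constructor
    · rintro ⟨hm, hodd⟩
      rcases lt_trichotomy m a with h | h | h
      · exact Or.inl ⟨h, hodd⟩
      · exact absurd hodd (by rw [h]; omega)
      · refine Or.inr ⟨n - m, ⟨by omega, ?_⟩, by omega⟩
        rwa [Nat.choose_symm (by omega : m ≤ n)]
    · rintro (⟨hm, hodd⟩ | ⟨m', ⟨hm', hodd⟩, rfl⟩)
      · exact ⟨by omega, hodd⟩
      · exact ⟨by omega, by rwa [Nat.choose_symm (by omega : m' ≤ n)]⟩
  have hdisj' : Disjoint A' (A'.image (fun m => n - m)) := by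
    rw [Finset.disjoint_left]
    rintro x hx hy
    simp only [hA', mem_image, mem_filter, mem_range] at hx hy
    obtain ⟨m', ⟨hm', _⟩, rfl⟩ := hy
    omega
  have hA'card : A'.card = 2 ^ (s - 1) := by
    have h1 : 2 ^ s = A'.card + A'.card := by
      rw [← hF, hsplit, Finset.card_union_of_disjoint hdisj', hB'card]
    omega
  set A : Finset (Fin (n + 1)) :=
    Finset.univ.filter (fun m => (m : ℕ) < a ∧ n.choose (m : ℕ) % 2 = 1) with hA
  have hAcard : A.card = 2 ^ (s - 1) := by
    rw [← hA'card]
    apply Finset.card_bij (fun (m : Fin (n + 1)) _ => (m : ℕ))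
    · intro m hm
      simp only [hA, mem_filter, mem_univ, true_and] at hm
      simp only [hA', mem_filter, mem_range]
      exact hm
    · intro m hm m' hm' h
      exact Fin.val_injective h
    · intro b hb
      simp only [hA', mem_filter, mem_range] at hb
      refine ⟨⟨b, by omega⟩, ?_, rfl⟩
      simp only [hA, mem_filter, mem_univ, true_and]
      exact hb
  have hrev : ∀ m : Fin (n + 1), (m.rev : ℕ) = n - (m : ℕ) := fun m => by
    simp only [Fin.rev]; omega
  set B : Finset (Fin (n + 1)) := A.image Fin.rev with hB
  have hBcard : B.card = 2 ^ (s - 1) := by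
    rw [hB, Finset.card_image_of_injective _ Fin.rev_injective, hAcard]
  have hmemB : ∀ y ∈ B, a < (y : ℕ) := by
    intro y hy
    simp only [hB, mem_image] at hy
    obtain ⟨m, hm, rfl⟩ := hy
    simp only [hA, mem_filter, mem_univ, true_and] at hm
    rw [hrev]; omega
  have hdisjAB : Disjoint A B := by
    rw [Finset.disjoint_left]; intro x hx hxB
    have := hmemB x hxB
    simp only [hA, mem_filter, mem_univ, true_and] at hx
    omega
  set C : Finset (Fin (n + 1)) := (A ∪ B)ᶜ with hC
  have hCcard : C.card = n + 1 - 2 ^ s := by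
    rw [hC, Finset.card_compl, Finset.card_union_of_disjoint hdisjAB, hAcard, hBcard, h2sum]
    simp
  let eqA := Finset.equivFinOfCardEq hAcard
  let eqC := Finset.equivFinOfCardEq hCcard
  let aa : Fin (2 ^ (s - 1)) → Fin (n + 1) := fun j => (eqA.symm j : Fin (n + 1))
  let bb : Fin (2 ^ (s - 1)) → Fin (n + 1) := fun j => Fin.rev (aa j)
  let cc : Fin (n + 1 - 2 ^ s) → Fin (n + 1) := fun i => (eqC.symm i : Fin (n + 1))
  have haaA : ∀ j, aa j ∈ A := fun j => (eqA.symm j).2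
  have hbbB : ∀ j, bb j ∈ B := fun j => Finset.mem_image_of_mem _ (haaA j)
  have hccC : ∀ i, cc i ∈ C := fun i => (eqC.symm i).2
  have haainj : Function.Injective aa := fun i j h =>
    eqA.symm.injective (Subtype.coe_injective h)
  have hccinj : Function.Injective cc := fun i j h =>
    eqC.symm.injective (Subtype.coe_injective h)
  have hABne : ∀ (x y : Fin (n + 1)), x ∈ A → y ∈ B → x ≠ y := fun x y hx hy he =>
    (Finset.disjoint_left.mp hdisjAB hx) (he ▸ hy)
  have hACne : ∀ (x y : Fin (n + 1)), x ∈ A → y ∈ C → x ≠ y := fun x y hx hy he => by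
    rw [hC, Finset.mem_compl] at hy
    exact hy (he ▸ Finset.mem_union_left _ hx)
  have hBCne : ∀ (x y : Fin (n + 1)), x ∈ B → y ∈ C → x ≠ y := fun x y hx hy he => by
    rw [hC, Finset.mem_compl] at hy
    exact hy (he ▸ Finset.mem_union_right _ hx)
  have hbij : Function.Bijective (Sum.elim (Sum.elim aa bb) cc) := by
    rw [Fintype.bijective_iff_injective_and_card]
    constructor
    · rintro ((j | j) | i) ((j' | j') | i') h <;>
        simp only [Sum.elim_inl, Sum.elim_inr] at h
      · rw [haainj h]
      · exact absurd h (hABne _ _ (haaA j) (hbbB j'))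
      · exact absurd h (hACne _ _ (haaA j) (hccC i'))
      · exact absurd h.symm (hABne _ _ (haaA j') (hbbB j))
      · rw [haainj (Fin.rev_injective h)]
      · exact absurd h (hBCne _ _ (hbbB j) (hccC i'))
      · exact absurd h.symm (hACne _ _ (haaA j') (hccC i))
      · exact absurd h.symm (hBCne _ _ (hbbB j') (hccC i))
      · rw [hccinj h]
    · simp only [Fintype.card_sum, Fintype.card_fin]
      omega
  obtain ⟨e, he⟩ := exists_equiv k aa bb cc hbij
  refine ⟨e, fun x => ?_⟩
  have hc0 : ((n.choose (n / 2) / 2 : ℕ) : k) = 0 := by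
    apply cast0
    have hid : n.choose a = 2 * ((2 * a - 1).choose (a - 1)) := by
      have h := Nat.add_one_mul_choose_eq (2 * a - 1) (a - 1)
      rw [show 2 * a - 1 + 1 = 2 * a by omega, show a - 1 + 1 = a by omega] at h
      rw [hn2]
      refine Nat.eq_of_mul_eq_mul_right hapos ?_
      rw [← h]; ring
    rw [hhalf, hid, Nat.mul_div_cancel_left _ (by norm_num : 0 < 2)]
    apply shifted_even a hapos
    rintro ⟨j, rfl⟩
    exact hnpow ⟨j + 1, by rw [hn2, pow_succ]; ring⟩
  rw [hc0, zero_mul, zero_add]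
  have hterm : ∀ m : Fin (n + 1),
      (if (m : ℕ) < n / 2 ∧ Even (m : ℕ) then (n.choose (m : ℕ) : k) * x m * x m.rev else 0)
        = if m ∈ A then x m * x m.rev else 0 := by
    intro m
    by_cases hodd : n.choose (m : ℕ) % 2 = 1
    · have hc1 : ((n.choose (m : ℕ) : ℕ) : k) = 1 := cast1 hodd
      have hev : Even (m : ℕ) := Nat.even_iff.mpr (even_of_choose_odd (by omega) hodd)
      by_cases hlt : (m : ℕ) < a
      · rw [if_pos (show (m : ℕ) < n / 2 ∧ Even (m : ℕ) from ⟨by omega, hev⟩),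
          if_pos (by simp only [hA, mem_filter, mem_univ, true_and]; exact ⟨hlt, hodd⟩), hc1,
          one_mul]
      · rw [if_neg (by rw [hhalf]; tauto),
          if_neg (by simp only [hA, mem_filter, mem_univ, true_and]; tauto)]
    · have h0 : ((n.choose (m : ℕ) : ℕ) : k) = 0 := cast0 (by omega)
      have hnotA : m ∉ A := by
        simp only [hA, mem_filter, mem_univ, true_and]; tauto
      rw [if_neg hnotA, h0]
      split <;> ring
  rw [Finset.sum_congr rfl (fun m _ => hterm m), Finset.sum_ite_mem, Finset.univ_inter]
  have hrhs : ∀ j, ((e x).1 j).1 * ((e x).1 j).2 = x (aa j) * x (bb j) := fun j => by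
    rw [he x j]
  rw [Finset.sum_congr rfl (fun j _ => hrhs j)]
  rw [← Finset.sum_coe_sort A (fun m => x m * x m.rev)]
  rw [← Equiv.sum_comp eqA.symm
    (fun y : {z // z ∈ A} => x (y : Fin (n + 1)) * x (Fin.rev (y : Fin (n + 1))))]
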